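/- Let T be the triangle with vertices (0,0), ((s_1/t_1)(a/b), a/b), ((s_2/t_2)(a/b), a/b), with a,b,t_1,t_2 positive integers, s_1,s_2 integers, s_2/t_2 > s_1/t_1, and all fractions in lowest terms. Then for all rational r with 0 <= r < b·lcm(t_1,t_2), |Q_1(T,r)| <= Q_1(T,0). Moreover Q_1(T,r) >= -Q_1(T,0) + (a/(b t_1)) + (a/(b t_2)). -/

import Mathlib

/-!
Cutting `r • T` by the horizontal lines `x₁ = n`, its lattice points are counted row by row:
row `n` (for `0 ≤ n ≤ ⌊r a / b⌋`) contains `⌊(s₂/t₂) n⌋ + 1 - ⌈(s₁/t₁) n⌉` of them. Over any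
`a t₁ t₂` consecutive rows the residues `s₂ n mod t₂` (resp. `-s₁ n mod t₁`) run `a t₁` (resp.
`a t₂`) times through a complete residue system, because `sᵢ` and `tᵢ` are coprime. Hence adding
the period `b t₁ t₂` to `r` changes the count by an explicit polynomial in `r` whose linear part
is the formula for `Q₁(T, r)`, with `{r a / b}` entering through `⌊r a / b⌋`. Since a
quasi-polynomial with a common period vanishing on `[0, ∞)` has vanishing coefficients, `Q₁(T, r)`
is given by that formula, and both inequalities follow from `0 ≤ {r a / b} < 1`.
-/

open Pointwise

/-- A point of `ℚⁿ` is a lattice point if all its coordinates are integers. -/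
def IsLatticePt {n : ℕ} (x : Fin n → ℚ) : Prop := ∀ i, ∃ z : ℤ, x i = (z : ℚ)

/-- The number of lattice points in the dilate `r • P`. -/
noncomputable def latticeCount {n : ℕ} (P : Set (Fin n → ℚ)) (r : ℚ) : ℕ :=
  Set.ncard {x | x ∈ r • P ∧ IsLatticePt x}

/-- A rational polytope: the convex hull of finitely many rational points. -/
def IsRatPolytope {n : ℕ} (P : Set (Fin n → ℚ)) : Prop :=
  ∃ V : Finset (Fin n → ℚ), P = convexHull ℚ (V : Set (Fin n → ℚ))

/-- The dimension of a set, as the dimension of its affine hull. -/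
noncomputable def polyDim {n : ℕ} (P : Set (Fin n → ℚ)) : ℕ :=
  Module.finrank ℚ (vectorSpan ℚ P)

/-- `F` is a face of the polytope `P`. -/
def IsFace {n : ℕ} (P F : Set (Fin n → ℚ)) : Prop :=
  F = P ∨ ∃ (f : (Fin n → ℚ) →ₗ[ℚ] ℚ) (c : ℚ),
    (∀ x ∈ P, f x ≤ c) ∧ F = {x | x ∈ P ∧ f x = c}

/-- `F` is an `i`-dimensional (nonempty) face of `P`. -/
def IsIFace {n : ℕ} (P F : Set (Fin n → ℚ)) (i : ℕ) : Prop :=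
  IsFace P F ∧ F.Nonempty ∧ polyDim F = i

/-- The dilated affine hull `r • aff(F)` contains a lattice point. -/
def DilAffHasLattice {n : ℕ} (F : Set (Fin n → ℚ)) (r : ℚ) : Prop :=
  ∃ x ∈ r • (affineSpan ℚ F : Set (Fin n → ℚ)), IsLatticePt x

/-- `k` is the `i`-index `d_i(P)`: the smallest positive integer such that
`k • aff(F)` contains a lattice point for every `i`-face `F` of `P`. -/
def IsIIndex {n : ℕ} (P : Set (Fin n → ℚ)) (i : ℕ) (k : ℕ) : Prop :=
  0 < k ∧ (∀ F, IsIFace P F i → DilAffHasLattice F (k : ℚ)) ∧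
    ∀ k' : ℕ, 0 < k' → (∀ F, IsIFace P F i → DilAffHasLattice F (k' : ℚ)) → k ≤ k'

/-- `q` is the rational `i`-index `rd_i(P)`: the smallest positive rational such that
`q • aff(F)` contains a lattice point for every `i`-face `F` of `P`. -/
def IsRatIIndex {n : ℕ} (P : Set (Fin n → ℚ)) (i : ℕ) (q : ℚ) : Prop :=
  0 < q ∧ (∀ F, IsIFace P F i → DilAffHasLattice F q) ∧
    ∀ q' : ℚ, 0 < q' → (∀ F, IsIFace P F i → DilAffHasLattice F q') → q ≤ q'

/-- An integral polytope: the convex hull of finitely many lattice points. -/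
def IsIntegralPolytope {n : ℕ} (P : Set (Fin n → ℚ)) : Prop :=
  ∃ V : Finset (Fin n → ℚ), (∀ v ∈ V, IsLatticePt v) ∧
    P = convexHull ℚ (V : Set (Fin n → ℚ))

/-- `q` is the rational denominator `q(P)`: the smallest positive rational such that
`q • P` is an integral polytope. -/
def IsRatDenom {n : ℕ} (P : Set (Fin n → ℚ)) (q : ℚ) : Prop :=
  0 < q ∧ IsIntegralPolytope (q • P) ∧
    ∀ q' : ℚ, 0 < q' → IsIntegralPolytope (q' • P) → q ≤ q'

/-- `f` is periodic with period `d`. -/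
def IsPeriodic (f : ℚ → ℚ) (d : ℚ) : Prop := ∀ r, f (r + d) = f r

/-- `Q` is a family of coefficient functions of the rational Ehrhart quasi-polynomial
of `P` (of degree `d`): each `Q i` is periodic with some positive period and
`#(rP ∩ ℤⁿ) = ∑_{i=0}^{d} Q_i(P,r) rⁱ` for all rational `r ≥ 0`. -/
def IsRatEhrhartCoeffs {n : ℕ} (P : Set (Fin n → ℚ)) (d : ℕ) (Q : ℕ → ℚ → ℚ) : Prop :=
  (∀ i, ∃ p : ℚ, 0 < p ∧ IsPeriodic (Q i) p) ∧
  ∀ r : ℚ, 0 ≤ r → (latticeCount P r : ℚ) = ∑ i ∈ Finset.range (d + 1), Q i r * r ^ i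

/-- `G` is the family of coefficient functions of the classical Ehrhart quasi-polynomial
of `P` (of degree `d`): each `G i` is periodic with some positive integer period and
`#(kP ∩ ℤⁿ) = ∑_{i=0}^{d} G_i(P,k) kⁱ` for all integers `k ≥ 0`. -/
def IsEhrhartCoeffs {n : ℕ} (P : Set (Fin n → ℚ)) (d : ℕ) (G : ℕ → ℕ → ℚ) : Prop :=
  (∀ i, ∃ p : ℕ, 0 < p ∧ ∀ k, G i (k + p) = G i k) ∧
  ∀ k : ℕ, (latticeCount P (k : ℚ) : ℚ) = ∑ i ∈ Finset.range (d + 1), G i k * (k : ℚ) ^ i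

/-- The triangle `T = conv((0,0), ((s₁/t₁)(a/b), a/b), ((s₂/t₂)(a/b), a/b))`. -/
def Tri (a b : ℕ) (s1 s2 : ℤ) (t1 t2 : ℕ) : Set (Fin 2 → ℚ) :=
  convexHull ℚ {![0, 0], ![((s1 : ℚ) / t1) * ((a : ℚ) / b), (a : ℚ) / b],
    ![((s2 : ℚ) / t2) * ((a : ℚ) / b), (a : ℚ) / b]}

def truncWedge (m1 m2 h : ℚ) : Set (Fin 2 → ℚ) :=
  {x | 0 ≤ x 1 ∧ x 1 ≤ h ∧ m1 * x 1 ≤ x 0 ∧ x 0 ≤ m2 * x 1}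

def rowWidth (m1 m2 : ℚ) (n : ℤ) : ℤ := ⌊m2 * n⌋ + 1 - ⌈m1 * n⌉

lemma convex_truncWedge (m1 m2 h : ℚ) : Convex ℚ (truncWedge m1 m2 h) := by
  rintro x ⟨hx0, hx1, hx2, hx3⟩ y ⟨hy0, hy1, hy2, hy3⟩ p q hp hq hpq
  refine ⟨?_, ?_, ?_, ?_⟩ <;> simp only [Pi.add_apply, Pi.smul_apply, smul_eq_mul] <;> nlinarith

lemma convexHull_eq_truncWedge {m1 m2 h : ℚ} (hm : m1 < m2) (hh : 0 < h) :
    convexHull ℚ {![0, 0], ![m1 * h, h], ![m2 * h, h]} = truncWedge m1 m2 h := by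
  refine (convexHull_min ?_ (convex_truncWedge m1 m2 h)).antisymm ?_
  · rintro x (rfl | rfl | rfl) <;>
      simp only [truncWedge, Set.mem_ofPred_eq, Matrix.cons_val_zero, Matrix.cons_val_one,
        Matrix.cons_val_fin_one, mul_zero] <;>
      exact ⟨by linarith, by linarith, by nlinarith, by nlinarith⟩
  rintro x ⟨hx0, hx1, hx2, hx3⟩
  have hm' : m2 - m1 ≠ 0 := (sub_pos.mpr hm).ne'
  have hh' : h ≠ 0 := hh.ne'
  -- barycentric coordinates of `x`
  set w : Fin 3 → ℚ := ![1 - x 1 / h, (m2 * x 1 - x 0) / ((m2 - m1) * h),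
    (x 0 - m1 * x 1) / ((m2 - m1) * h)]
  have hx : x = ∑ i, w i • ![![0, 0], ![m1 * h, h], ![m2 * h, h]] i := by
    ext j
    fin_cases j <;>
      simp only [w, Fin.sum_univ_three, Finset.sum_apply, Pi.smul_apply, smul_eq_mul,
        Matrix.cons_val', Matrix.cons_val_zero, Matrix.cons_val_one, Matrix.cons_val_fin_one,
        Matrix.cons_val, Fin.zero_eta, Fin.mk_one, mul_zero, zero_add] <;>
      field_simp <;> ring
  rw [hx]
  refine (convex_convexHull ℚ _).sum_mem (fun i _ => ?_) ?_ (fun i _ => ?_)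
  · fin_cases i <;>
      simp only [w, Matrix.cons_val_zero, Matrix.cons_val_one, Matrix.cons_val, Fin.zero_eta,
        Fin.mk_one, Fin.reduceFinMk, sub_nonneg]
    · exact (div_le_one hh).mpr hx1
    all_goals exact div_nonneg (by linarith) (mul_nonneg (by linarith) hh.le)
  · simp only [w, Fin.sum_univ_three, Matrix.cons_val_zero, Matrix.cons_val_one, Matrix.cons_val]
    field_simp
    ring
  · exact subset_convexHull ℚ _ (by fin_cases i <;> simp)

lemma smul_truncWedge (m1 m2 : ℚ) {h r : ℚ} (hh : 0 ≤ h) (hr : 0 ≤ r) :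
    r • truncWedge m1 m2 h = truncWedge m1 m2 (r * h) := by
  rcases hr.eq_or_lt with rfl | hr
  · have h0 : (0 : Fin 2 → ℚ) ∈ truncWedge m1 m2 h := by simp [truncWedge, hh]
    rw [Set.zero_smul_set ⟨0, h0⟩]
    ext x
    simp only [truncWedge, Set.mem_ofPred_eq, zero_mul]
    refine ⟨by rintro rfl; simp, fun ⟨h1, h2, h3, h4⟩ => ?_⟩
    have hx1 : x 1 = 0 := le_antisymm h2 h1
    rw [hx1, mul_zero] at h3 h4
    ext i; fin_cases i
    · exact le_antisymm h4 h3
    · exact hx1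
  ext x
  rw [Set.mem_smul_set_iff_inv_smul_mem₀ hr.ne']
  simp only [truncWedge, Set.mem_ofPred_eq, Pi.smul_apply, smul_eq_mul]
  have hr' : 0 < r⁻¹ := inv_pos.mpr hr
  have hx : x 1 = r * (r⁻¹ * x 1) := by field_simp
  constructor
  · rintro ⟨h1, h2, h3, h4⟩
    refine ⟨by nlinarith, by rw [hx]; gcongr, by nlinarith, by nlinarith⟩
  · rintro ⟨h1, h2, h3, h4⟩
    refine ⟨by positivity, ?_, by nlinarith, by nlinarith⟩
    rw [← inv_mul_le_iff₀ hr] at h2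
    exact h2

lemma latticePts_truncWedge (m1 m2 H : ℚ) :
    {x | x ∈ truncWedge m1 m2 H ∧ IsLatticePt x} =
      (fun p : ℤ × ℤ => ![(p.1 : ℚ), p.2]) ''
        ↑((Finset.Icc 0 ⌊H⌋).biUnion fun n => (Finset.Icc ⌈m1 * n⌉ ⌊m2 * n⌋).image (·, n)) := by
  ext x
  simp only [truncWedge, Finset.coe_biUnion, Finset.coe_image, Finset.coe_Icc, Set.mem_iUnion,
    Set.mem_image, Set.mem_Icc, Set.mem_ofPred_eq, exists_prop]
  constructor
  · rintro ⟨⟨h0, h1, h2, h3⟩, hx⟩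
    obtain ⟨⟨m, hm⟩, ⟨n, hn⟩⟩ := And.intro (hx 0) (hx 1)
    rw [hn] at h0 h1
    rw [hm, hn] at h2 h3
    refine ⟨(m, n), ⟨n, ⟨by exact_mod_cast h0, Int.le_floor.mpr h1⟩, m,
      ⟨Int.ceil_le.mpr h2, Int.le_floor.mpr h3⟩, rfl⟩, ?_⟩
    ext i; fin_cases i <;> simp [hm, hn]
  · rintro ⟨-, ⟨n, ⟨hn0, hnH⟩, m, ⟨hm1, hm2⟩, rfl⟩, rfl⟩
    refine ⟨⟨by simpa using hn0, ?_, by simpa using Int.ceil_le.mp hm1,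
      by simpa using Int.le_floor.mp hm2⟩, fun i => ?_⟩
    · simpa using (Int.le_floor.mp hnH)
    · fin_cases i
      exacts [⟨m, rfl⟩, ⟨n, rfl⟩]

lemma rowWidth_nonneg {m1 m2 : ℚ} (hm : m1 ≤ m2) {n : ℤ} (hn : 0 ≤ n) :
    0 ≤ rowWidth m1 m2 n := by
  have hfloor : ⌊m1 * n⌋ ≤ ⌊m2 * n⌋ :=
    Int.floor_le_floor (mul_le_mul_of_nonneg_right hm (by exact_mod_cast hn))
  have := Int.ceil_le_floor_add_one (m1 * n)
  unfold rowWidth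
  omega

lemma ncard_latticePts_truncWedge {m1 m2 : ℚ} (hm : m1 ≤ m2) (H : ℚ) :
    ({x | x ∈ truncWedge m1 m2 H ∧ IsLatticePt x}.ncard : ℤ) =
      ∑ n ∈ Finset.Icc 0 ⌊H⌋, rowWidth m1 m2 n := by
  have hinj : Function.Injective fun p : ℤ × ℤ => ![(p.1 : ℚ), p.2] := by
    intro p q hpq
    have h0 := congrFun hpq 0
    have h1 := congrFun hpq 1
    simp only [Matrix.cons_val_zero, Matrix.cons_val_one, Int.cast_inj] at h0 h1
    exact Prod.ext h0 h1
  rw [latticePts_truncWedge, Set.ncard_image_of_injective _ hinj, Set.ncard_coe_finset,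
    Finset.card_biUnion, Nat.cast_sum]
  · refine Finset.sum_congr rfl fun n hn => ?_
    rw [Finset.card_image_of_injective _ (fun p q h => (Prod.mk.inj h).1), Int.card_Icc]
    exact Int.toNat_of_nonneg (rowWidth_nonneg hm (Finset.mem_Icc.mp hn).1)
  · intro i _ j _ hij
    simp only [Finset.disjoint_left, Finset.mem_image]
    rintro _ ⟨_, _, rfl⟩ ⟨_, _, h⟩
    exact hij (Prod.mk.inj h).2.symm

lemma sum_Ico_add_sum_Ico {α M : Type*} [LinearOrder α] [LocallyFiniteOrder α] [AddCommMonoid M]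
    (f : α → M) {a b c : α} (hab : a ≤ b) (hbc : b ≤ c) :
    ∑ x ∈ Finset.Ico a b, f x + ∑ x ∈ Finset.Ico b c, f x = ∑ x ∈ Finset.Ico a c, f x := by
  rw [← Finset.sum_union (Finset.Ico_disjoint_Ico_consecutive a b c),
    Finset.Ico_union_Ico_eq_Ico hab hbc]

lemma two_mul_sum_Ico_add (A : ℤ) (K : ℕ) :
    2 * ∑ n ∈ Finset.Ico A (A + K), n = K * (2 * A + K - 1) := by
  induction K with
  | zero => simp
  | succ k ih =>
    rw [Nat.cast_succ, ← add_assoc, ← Finset.sum_Ico_add_eq_sum_Ico_add_one (by omega), mul_add, ih]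
    ring

lemma injOn_mul_emod_Ico {c t : ℤ} (hc : IsCoprime c t) (M : ℤ) :
    Set.InjOn (fun n => c * n % t) (Finset.Ico M (M + t)) := by
  intro n hn n' hn' h
  simp only [Finset.coe_Ico, Set.mem_Ico] at hn hn'
  have hdvd : t ∣ n - n' :=
    hc.symm.dvd_of_dvd_mul_left (by rw [mul_sub]; exact Int.ModEq.dvd h.symm)
  have := Int.eq_zero_of_abs_lt_dvd hdvd (abs_sub_lt_iff.mpr ⟨by omega, by omega⟩)
  omega

lemma image_mul_emod_Ico {c t : ℤ} (ht : 0 < t) (hc : IsCoprime c t) (M : ℤ) :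
    (Finset.Ico M (M + t)).image (fun n => c * n % t) = Finset.Ico 0 t := by
  refine Finset.eq_of_subset_of_card_le (fun y hy => ?_) ?_
  · obtain ⟨n, -, rfl⟩ := Finset.mem_image.mp hy
    exact Finset.mem_Ico.mpr ⟨Int.emod_nonneg _ ht.ne', Int.emod_lt_of_pos _ ht⟩
  · rw [Finset.card_image_of_injOn (injOn_mul_emod_Ico hc M), Int.card_Ico, Int.card_Ico,
      add_sub_cancel_left, sub_zero]

lemma two_mul_sum_mul_emod_Ico {c t : ℤ} (ht : 0 < t) (hc : IsCoprime c t) (M : ℤ) :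
    2 * ∑ n ∈ Finset.Ico M (M + t), c * n % t = t * (t - 1) := by
  have h := Finset.sum_image (f := fun y : ℤ => y) (injOn_mul_emod_Ico hc M)
  rw [image_mul_emod_Ico ht hc] at h
  rw [← h]
  simpa [Int.toNat_of_nonneg ht.le] using two_mul_sum_Ico_add 0 t.toNat

lemma fract_div_mul_intCast (s : ℤ) (t : ℕ) (n : ℤ) :
    Int.fract ((s / t : ℚ) * n) = ((s * n % t : ℤ) : ℚ) / t := by
  rw [← Int.fract_div_intCast_eq_div_intCast_mod, div_mul_eq_mul_div, Int.cast_mul]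

lemma sum_fract_div_mul_Ico {s : ℤ} {t : ℕ} (ht : 0 < t) (hst : IsCoprime s t) (M : ℤ) :
    ∑ n ∈ Finset.Ico M (M + t), Int.fract ((s / t : ℚ) * n) = (t - 1) / 2 := by
  have h := two_mul_sum_mul_emod_Ico (by exact_mod_cast ht) hst M
  have ht' : (t : ℚ) ≠ 0 := by positivity
  simp_rw [fract_div_mul_intCast, ← Finset.sum_div, ← Int.cast_sum]
  rw [div_eq_div_iff ht' two_ne_zero]
  have h' : (∑ n ∈ Finset.Ico M (M + t), s * n % t) * 2 = (t - 1) * t := by linear_combination h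
  exact_mod_cast h'

lemma sum_fract_div_mul_Ico_mul {s : ℤ} {t : ℕ} (ht : 0 < t) (hst : IsCoprime s t) (M : ℤ)
    (q : ℕ) : ∑ n ∈ Finset.Ico M (M + q * t), Int.fract ((s / t : ℚ) * n) = q * (t - 1) / 2 := by
  induction q with
  | zero => simp
  | succ q ih =>
    have hq : (0 : ℤ) ≤ q * t := by positivity
    rw [Nat.cast_succ, add_one_mul, ← add_assoc,
      ← sum_Ico_add_sum_Ico _ (b := M + q * t) (by omega) (by omega), ih, sum_fract_div_mul_Ico ht hst]
    push_cast
    ring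

lemma rowWidth_eq (m1 m2 : ℚ) (n : ℤ) :
    (rowWidth m1 m2 n : ℚ) = (m2 - m1) * n + 1 - Int.fract (m2 * n) - Int.fract (-m1 * n) := by
  rw [rowWidth, ← neg_neg (m1 * n), Int.ceil_neg, neg_mul]
  unfold Int.fract
  push_cast
  ring

lemma sum_rowWidth_Ico {a t1 t2 : ℕ} {s1 s2 : ℤ} (ht1 : 0 < t1) (ht2 : 0 < t2)
    (h1 : IsCoprime s1 t1) (h2 : IsCoprime s2 t2) (A : ℤ) :
    ∑ n ∈ Finset.Ico A (A + a * t1 * t2), (rowWidth (s1 / t1) (s2 / t2) n : ℚ) =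
      (s2 / t2 - s1 / t1 : ℚ) * (a * t1 * t2 * (2 * A + a * t1 * t2 - 1) / 2) +
        a * (t1 + t2) / 2 := by
  have hid := two_mul_sum_Ico_add A (a * t1 * t2)
  have hfract2 := sum_fract_div_mul_Ico_mul ht2 h2 A (a * t1)
  have hfract1 := sum_fract_div_mul_Ico_mul ht1 h1.neg_left A (a * t2)
  rw [← Int.cast_inj (α := ℚ)] at hid
  push_cast [mul_right_comm _ (t2 : ℤ) (t1 : ℤ), Int.cast_sum] at hid hfract1 hfract2
  have hcard : ∑ _n ∈ Finset.Ico A (A + a * t1 * t2), (1 : ℚ) = a * t1 * t2 := by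
    rw [Finset.sum_const, Int.card_Ico, add_sub_cancel_left, nsmul_one]
    exact_mod_cast Int.toNat_natCast (a * t1 * t2)
  rw [neg_div] at hfract1
  simp only [rowWidth_eq, Finset.sum_sub_distrib, Finset.sum_add_distrib, ← Finset.mul_sum,
    hfract1, hfract2, hcard]
  linear_combination (s2 / t2 - s1 / t1 : ℚ) / 2 * hid

-- The remainder of the lattice count is only known to be periodic on `[0, ∞)`.
def PeriodicOnNonneg (f : ℚ → ℚ) (c : ℚ) : Prop := ∀ x, 0 ≤ x → f (x + c) = f x

lemma PeriodicOnNonneg.nat_mul {f : ℚ → ℚ} {c : ℚ} (hf : PeriodicOnNonneg f c) (hc : 0 ≤ c)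
    (n : ℕ) : PeriodicOnNonneg f (n * c) := by
  induction n with
  | zero => simp [PeriodicOnNonneg]
  | succ n ih =>
    intro x hx
    rw [Nat.cast_succ, add_one_mul, ← add_assoc, hf _ (by positivity), ih x hx]

lemma Function.Periodic.periodicOnNonneg {f : ℚ → ℚ} {c : ℚ} (hf : Function.Periodic f c) :
    PeriodicOnNonneg f c := fun x _ => hf x

lemma PeriodicOnNonneg.sub {f g : ℚ → ℚ} {c : ℚ} (hf : PeriodicOnNonneg f c)
    (hg : PeriodicOnNonneg g c) : PeriodicOnNonneg (f - g) c := fun x hx => by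
  simp only [Pi.sub_apply, hf x hx, hg x hx]

lemma exists_nat_mul_eq_nat_mul {q p : ℚ} (hq : 0 < q) (hp : 0 < p) :
    ∃ m n : ℕ, 0 < m ∧ (m : ℚ) * q = n * p := by
  obtain ⟨k, hk⟩ := Int.eq_ofNat_of_zero_le (Rat.num_pos.mpr hp).le
  obtain ⟨l, hl⟩ := Int.eq_ofNat_of_zero_le (Rat.num_pos.mpr hq).le
  have hk0 : 0 < k := by have := Rat.num_pos.mpr hp; omega
  refine ⟨q.den * k, p.den * l, Nat.mul_pos q.den_pos hk0, ?_⟩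
  have hk' : (p.num : ℚ) = k := by exact_mod_cast hk
  have hl' : (q.num : ℚ) = l := by exact_mod_cast hl
  push_cast
  linear_combination (k : ℚ) * Rat.mul_den_eq_num q - l * Rat.mul_den_eq_num p + k * hl' - l * hk'

lemma exists_common_nat_multiple (s : Finset ℚ) (hs : ∀ q ∈ s, 0 < q) :
    ∃ W > 0, ∀ q ∈ s, ∃ k : ℕ, W = k * q := by
  classical
  induction s using Finset.induction_on with
  | empty => exact ⟨1, one_pos, by simp⟩
  | insert p s _ ih =>
    obtain ⟨W, hW, hWs⟩ := ih fun q hq => hs q (Finset.mem_insert_of_mem hq)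
    obtain ⟨m, n, hm, hmn⟩ := exists_nat_mul_eq_nat_mul hW (hs p (Finset.mem_insert_self p s))
    refine ⟨m * W, by positivity, fun q hq => ?_⟩
    rcases Finset.mem_insert.mp hq with rfl | hq
    · exact ⟨n, hmn⟩
    · obtain ⟨k, rfl⟩ := hWs q hq
      exact ⟨m * k, by push_cast; ring⟩

lemma PeriodicOnNonneg.linCoeff_eq_zero {D0 D1 D2 : ℚ → ℚ} {W : ℚ} (hW : 0 < W)
    (h0 : PeriodicOnNonneg D0 W) (h1 : PeriodicOnNonneg D1 W) (h2 : PeriodicOnNonneg D2 W)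
    (h : ∀ x, 0 ≤ x → D0 x + D1 x * x + D2 x * x ^ 2 = 0) {x : ℚ} (hx : 0 ≤ x) : D1 x = 0 := by
  have hx1 : 0 ≤ x + W := by positivity
  have e0 := h x hx
  have e1 := h (x + W) hx1
  have e2 := h (x + W + W) (by positivity)
  rw [h0 _ hx1, h1 _ hx1, h2 _ hx1] at e2
  rw [h0 _ hx, h1 _ hx, h2 _ hx] at e1 e2
  -- the second difference isolates `D2 x`, then the first difference isolates `D1 x`
  have hD2 : D2 x = 0 := by
    have : D2 x * (2 * W ^ 2) = 0 := by linear_combination e2 - 2 * e1 + e0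
    exact (mul_eq_zero.mp this).resolve_right (by positivity)
  have : D1 x * W = 0 := by linear_combination e1 - e0 - (2 * x * W + W ^ 2) * hD2
  exact (mul_eq_zero.mp this).resolve_right hW.ne'

lemma IsRatEhrhartCoeffs.linCoeff_eq {n : ℕ} {P : Set (Fin n → ℚ)} {Q : ℕ → ℚ → ℚ}
    (hQ : IsRatEhrhartCoeffs P 2 Q) {G F1 : ℚ → ℚ} {F2 p : ℚ} (hp : 0 < p)
    (hG : PeriodicOnNonneg G p) (hF1 : PeriodicOnNonneg F1 p)
    (hL : ∀ x, 0 ≤ x → (latticeCount P x : ℚ) = G x + F1 x * x + F2 * x ^ 2) {x : ℚ}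
    (hx : 0 ≤ x) : Q 1 x = F1 x := by
  obtain ⟨hper, hsum⟩ := hQ
  obtain ⟨q0, hq0, hQ0⟩ := hper 0
  obtain ⟨q1, hq1, hQ1⟩ := hper 1
  obtain ⟨q2, hq2, hQ2⟩ := hper 2
  obtain ⟨W, hW, hWmul⟩ := exists_common_nat_multiple {q0, q1, q2, p} (by simp [*])
  have hperiodic {f : ℚ → ℚ} {c : ℚ} (hf : PeriodicOnNonneg f c) (hc : 0 < c)
      (hcW : c ∈ ({q0, q1, q2, p} : Finset ℚ)) : PeriodicOnNonneg f W := by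
    obtain ⟨k, rfl⟩ := hWmul c hcW
    exact hf.nat_mul hc.le k
  have h := PeriodicOnNonneg.linCoeff_eq_zero (D0 := Q 0 - G) (D1 := Q 1 - F1)
    (D2 := Q 2 - fun _ => F2) hW
    ((hperiodic (Function.Periodic.periodicOnNonneg hQ0) hq0 (by simp)).sub
      (hperiodic hG hp (by simp)))
    ((hperiodic (Function.Periodic.periodicOnNonneg hQ1) hq1 (by simp)).sub
      (hperiodic hF1 hp (by simp)))
    ((hperiodic (Function.Periodic.periodicOnNonneg hQ2) hq2 (by simp)).sub
      (fun _ _ => rfl))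
    (fun y hy => by
      have := hsum y hy
      simp only [Finset.sum_range_succ, Finset.sum_range_zero, pow_zero, pow_one] at this
      simp only [Pi.sub_apply]
      linear_combination this.symm.trans (hL y hy)) hx
  exact sub_eq_zero.mp h

/-- The right-hand side of the paper's formula for `Q₁(T, r)`. -/
noncomputable def triLinCoeff (a b : ℕ) (s1 s2 : ℤ) (t1 t2 : ℕ) (r : ℚ) : ℚ :=
  (a / b) * ((t1 + t2) / (2 * t1 * t2) - (Int.fract (r * (a / b)) - 1 / 2) * (s2 / t2 - s1 / t1))

noncomputable def triArea (a b : ℕ) (s1 s2 : ℤ) (t1 t2 : ℕ) : ℚ :=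
  (s2 / t2 - s1 / t1) / 2 * (a / b) ^ 2

section Triangle

variable {a b t1 t2 : ℕ} {s1 s2 : ℤ}

lemma latticeCount_Tri (ha : 0 < a) (hb : 0 < b)
    (hslope : (s1 : ℚ) / t1 < (s2 : ℚ) / t2) {r : ℚ} (hr : 0 ≤ r) :
    (latticeCount (Tri a b s1 s2 t1 t2) r : ℚ) =
      ∑ n ∈ Finset.Icc 0 ⌊r * (a / b)⌋, (rowWidth (s1 / t1) (s2 / t2) n : ℚ) := by
  have hh : (0 : ℚ) < a / b := by positivity
  rw [latticeCount, Tri, convexHull_eq_truncWedge hslope hh, smul_truncWedge _ _ hh.le hr]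
  exact_mod_cast ncard_latticePts_truncWedge hslope.le _

lemma periodic_triLinCoeff (hb : 0 < b) :
    Function.Periodic (triLinCoeff a b s1 s2 t1 t2) b := by
  intro r
  have hshift : (r + b) * (a / b) = r * (a / b) + (a : ℤ) := by
    push_cast
    field_simp
  rw [triLinCoeff, triLinCoeff, hshift, Int.fract_add_intCast]

lemma latticeCount_Tri_add_sub (ha : 0 < a) (hb : 0 < b)
    (ht1 : 0 < t1) (ht2 : 0 < t2) (hslope : (s1 : ℚ) / t1 < (s2 : ℚ) / t2)
    (h1 : IsCoprime s1 t1) (h2 : IsCoprime s2 t2) {r : ℚ} (hr : 0 ≤ r) :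
    (latticeCount (Tri a b s1 s2 t1 t2) (r + b * t1 * t2) : ℚ) -
        latticeCount (Tri a b s1 s2 t1 t2) r =
      b * t1 * t2 * triLinCoeff a b s1 s2 t1 t2 r +
        triArea a b s1 s2 t1 t2 * (2 * r * (b * t1 * t2) + (b * t1 * t2) ^ 2) := by
  set N := ⌊r * (a / b)⌋ with hN
  have hN0 : 0 ≤ N := Int.floor_nonneg.mpr (by positivity)
  have hshift : (r + b * t1 * t2) * (a / b) = r * (a / b) + (a * t1 * t2 : ℤ) := by
    push_cast
    field_simp
  rw [latticeCount_Tri ha hb hslope hr, latticeCount_Tri ha hb hslope (by positivity), hshift,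
    Int.floor_add_intCast, ← hN, ← Finset.Ico_add_one_right_eq_Icc,
    ← Finset.Ico_add_one_right_eq_Icc, add_right_comm N,
    ← sum_Ico_add_sum_Ico _ (b := N + 1) (by omega)
      (le_add_of_nonneg_right (by positivity)), add_sub_cancel_left,
    sum_rowWidth_Ico ht1 ht2 h1 h2]
  have hNfract : (N : ℚ) = r * (a / b) - Int.fract (r * (a / b)) := (Int.self_sub_fract _).symm
  rw [triLinCoeff, triArea]
  push_cast
  rw [hNfract]
  field_simp
  ring

lemma IsRatEhrhartCoeffs.linCoeff_Tri (ha : 0 < a) (hb : 0 < b)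
    (ht1 : 0 < t1) (ht2 : 0 < t2) (hslope : (s1 : ℚ) / t1 < (s2 : ℚ) / t2)
    (h1 : IsCoprime s1 t1) (h2 : IsCoprime s2 t2) {Q : ℕ → ℚ → ℚ}
    (hQ : IsRatEhrhartCoeffs (Tri a b s1 s2 t1 t2) 2 Q) {r : ℚ} (hr : 0 ≤ r) :
    Q 1 r = triLinCoeff a b s1 s2 t1 t2 r := by
  have hper : Function.Periodic (triLinCoeff a b s1 s2 t1 t2) b := periodic_triLinCoeff hb
  have hF1 : PeriodicOnNonneg (triLinCoeff a b s1 s2 t1 t2) (b * t1 * t2) := by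
    convert hper.periodicOnNonneg.nat_mul (by positivity) (t1 * t2) using 1
    push_cast
    ring
  refine hQ.linCoeff_eq (G := fun x => latticeCount (Tri a b s1 s2 t1 t2) x -
      triLinCoeff a b s1 s2 t1 t2 x * x - triArea a b s1 s2 t1 t2 * x ^ 2)
    (by positivity) (fun x hx => ?_) hF1 (fun x _ => by ring) hr
  linear_combination latticeCount_Tri_add_sub ha hb ht1 ht2 hslope h1 h2 hx -
    (x + b * t1 * t2) * hF1 x hx

lemma abs_triLinCoeff_le (hslope : (s1 : ℚ) / t1 ≤ s2 / t2) (r : ℚ) :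
    |triLinCoeff a b s1 s2 t1 t2 r| ≤ triLinCoeff a b s1 s2 t1 t2 0 := by
  have hθ0 := Int.fract_nonneg (r * (a / b))
  have hθ1 := Int.fract_lt_one (r * (a / b))
  have hD : 0 ≤ (s2 / t2 - s1 / t1 : ℚ) := sub_nonneg.mpr hslope
  have hU : (0 : ℚ) ≤ (t1 + t2) / (2 * t1 * t2) := by positivity
  have hX : (0 : ℚ) ≤ a / b := by positivity
  simp only [triLinCoeff, zero_mul, Int.fract_zero]
  rw [abs_le]
  constructor <;> nlinarith [mul_nonneg hX hU, mul_nonneg (mul_nonneg hX hD) hθ0,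
    mul_nonneg (mul_nonneg hX hD) (sub_nonneg.mpr hθ1.le)]

lemma triLinCoeff_ge (ht1 : 0 < t1) (ht2 : 0 < t2)
    (hslope : (s1 : ℚ) / t1 ≤ s2 / t2) (r : ℚ) :
    -triLinCoeff a b s1 s2 t1 t2 0 + a / (b * t1) + a / (b * t2) ≤
      triLinCoeff a b s1 s2 t1 t2 r := by
  have hθ1 := Int.fract_lt_one (r * (a / b))
  have hD : 0 ≤ (s2 / t2 - s1 / t1 : ℚ) := sub_nonneg.mpr hslope
  have hX : (0 : ℚ) ≤ a / b := by positivity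
  have hsum : (a / (b * t1) + a / (b * t2) : ℚ) = 2 * (a / b) * ((t1 + t2) / (2 * t1 * t2)) := by
    field_simp
    ring
  simp only [triLinCoeff, zero_mul, Int.fract_zero]
  nlinarith [mul_nonneg (mul_nonneg hX hD) (sub_nonneg.mpr hθ1.le)]

end Triangle

theorem stmt14_general (a b t1 t2 : ℕ) (s1 s2 : ℤ) (ha : 0 < a) (hb : 0 < b)
    (ht1 : 0 < t1) (ht2 : 0 < t2) (hslope : (s1 : ℚ) / t1 < (s2 : ℚ) / t2)
    (h1 : Int.gcd s1 (t1 : ℤ) = 1) (h2 : Int.gcd s2 (t2 : ℤ) = 1)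
    (Q : ℕ → ℚ → ℚ) (hQ : IsRatEhrhartCoeffs (Tri a b s1 s2 t1 t2) 2 Q) :
    ∀ r : ℚ, 0 ≤ r → r < (b : ℚ) * (Nat.lcm t1 t2 : ℚ) →
      |Q 1 r| ≤ Q 1 0 ∧
      Q 1 r ≥ -Q 1 0 + (a : ℚ) / ((b : ℚ) * t1) + (a : ℚ) / ((b : ℚ) * t2) := by
  rintro r hr -
  have hQ1 {x : ℚ} (hx : 0 ≤ x) : Q 1 x = triLinCoeff a b s1 s2 t1 t2 x :=
    hQ.linCoeff_Tri ha hb ht1 ht2 hslope (Int.isCoprime_iff_gcd_eq_one.mpr h1)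
      (Int.isCoprime_iff_gcd_eq_one.mpr h2) hx
  rw [hQ1 hr, hQ1 le_rfl]
  exact ⟨abs_triLinCoeff_le hslope.le r, triLinCoeff_ge ht1 ht2 hslope.le r⟩

/-- `|Q₁(T,r)| ≤ Q₁(T,0)` for `0 ≤ r < b·lcm(t₁,t₂)`, and moreover
`Q₁(T,r) ≥ -Q₁(T,0) + a/(bt₁) + a/(bt₂)`. -/
theorem stmt14 (a b t1 t2 : ℕ) (s1 s2 : ℤ) (ha : 0 < a) (hb : 0 < b)
    (ht1 : 0 < t1) (ht2 : 0 < t2) (hslope : (s1 : ℚ) / t1 < (s2 : ℚ) / t2)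
    (hab : Nat.Coprime a b) (h1 : Int.gcd s1 (t1 : ℤ) = 1) (h2 : Int.gcd s2 (t2 : ℤ) = 1)
    (Q : ℕ → ℚ → ℚ) (hQ : IsRatEhrhartCoeffs (Tri a b s1 s2 t1 t2) 2 Q) :
    ∀ r : ℚ, 0 ≤ r → r < (b : ℚ) * (Nat.lcm t1 t2 : ℚ) →
      |Q 1 r| ≤ Q 1 0 ∧
      Q 1 r ≥ -Q 1 0 + (a : ℚ) / ((b : ℚ) * t1) + (a : ℚ) / ((b : ℚ) * t2) :=
  stmt14_general a b t1 t2 s1 s2 ha hb ht1 ht2 hslope h1 h2 Q hQ
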